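/- Fix m ≥ 2 and let H = {x ∈ ℝ^{m+1} : Σ_{i=0}^{m} x_i = 0}, an m-dimensional real inner product space with the inner product inherited from the standard Euclidean inner product on ℝ^{m+1}. Then there exists a nonzero real number λ such that the symmetric trilinear form on H defined by τ(x,y,z) = λ · Σ_{i=0}^{m} x_i y_i z_i is traceless and satisfies the superconformal identity. Moreover, this τ is invariant under all the linear isometries of H induced by permutations of the coordinates of ℝ^{m+1}. -/

import Mathlib

/-!
For every orthonormal basis `(bᵣ)` of `H`, the completeness relation reads
`∑ᵣ bᵣ(i) bᵣ(j) = δᵢⱼ - 1/(m+1)`, the matrix of the orthogonal projection onto `H`; it follows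
from Parseval's identity applied to the projections `eᵢ - 𝟙/(m+1)` of the standard basis
vectors, which represent the coordinate functionals on `H`. Contracting the cube form with it
gives `∑ᵣ τ(bᵣ,bᵣ,y) = (1 - 1/(m+1)) ∑ᵢ yᵢ = 0` and
`∑ᵣ τ(bᵣ,p,s) τ(bᵣ,q,t) = ∑ᵢ pᵢsᵢqᵢtᵢ - ⟨p,s⟩⟨q,t⟩/(m+1)`. The quartic term is symmetric in
`s, t` and cancels in the superconformal identity, so `λ = √(m+1)` works.
-/

open scoped BigOperators RealInnerProductSpace

noncomputable section

/-- The hyperplane `{x ∈ ℝ^{m+1} : ∑ xᵢ = 0}`, as a submodule of Euclidean space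
(hence inheriting the standard inner product). -/
def zeroSumHyperplane (m : ℕ) : Submodule ℝ (EuclideanSpace ℝ (Fin (m + 1))) where
  carrier := {x | ∑ i, x i = 0}
  add_mem' := by
    intro a b ha hb
    simp only [Set.mem_setOf_eq, PiLp.add_apply] at *
    rw [Finset.sum_add_distrib, ha, hb, add_zero]
  zero_mem' := by
    simp only [Set.mem_setOf_eq, PiLp.zero_apply, Finset.sum_const_zero]
  smul_mem' := by
    intro c a ha
    simp only [Set.mem_setOf_eq, PiLp.smul_apply, smul_eq_mul] at *
    rw [← Finset.mul_sum, ha, mul_zero]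

/-- The symmetric trilinear "coordinate cube" form `(x,y,z) ↦ ∑ᵢ xᵢ yᵢ zᵢ` on the
zero-sum hyperplane. -/
def cubeForm (m : ℕ) (x y z : zeroSumHyperplane m) : ℝ :=
  ∑ i, (x : EuclideanSpace ℝ (Fin (m + 1))) i * (y : EuclideanSpace ℝ (Fin (m + 1))) i *
    (z : EuclideanSpace ℝ (Fin (m + 1))) i

/-- The linear isometry of the zero-sum hyperplane induced by a permutation `σ` of the
coordinates of `ℝ^{m+1}`, sending `x` to `i ↦ x (σ i)`. -/
def permOnHyperplane (m : ℕ) (σ : Equiv.Perm (Fin (m + 1)))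
    (x : zeroSumHyperplane m) : zeroSumHyperplane m :=
  ⟨(WithLp.toLp 2 (fun i => (x : EuclideanSpace ℝ (Fin (m + 1))) (σ i)) : EuclideanSpace ℝ (Fin (m + 1))),
    by
      have hx : ∑ i, (x : EuclideanSpace ℝ (Fin (m + 1))) i = 0 := x.2
      show ∑ i, (x : EuclideanSpace ℝ (Fin (m + 1))) (σ i) = 0
      rw [Equiv.sum_comp σ]
      exact hx⟩

namespace zeroSumHyperplane

variable {m : ℕ}

theorem sum_apply_eq_zero (x : zeroSumHyperplane m) : ∑ i, x.1 i = 0 := x.2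

theorem inner_eq_sum (x y : zeroSumHyperplane m) : ⟪x, y⟫ = ∑ i, x.1 i * y.1 i := by
  simp [Submodule.coe_inner, PiLp.inner_apply, mul_comm]

def coordVector (m : ℕ) (i : Fin (m + 1)) : zeroSumHyperplane m :=
  ⟨WithLp.toLp 2 fun k => (if k = i then 1 else 0) - 1 / (m + 1), by
    change ∑ k, ((if k = i then (1 : ℝ) else 0) - 1 / (m + 1)) = 0
    rw [Finset.sum_sub_distrib, Finset.sum_ite_eq', Finset.sum_const, Finset.card_fin,
      nsmul_eq_mul]
    simp only [Finset.mem_univ, if_true, Nat.cast_add, Nat.cast_one]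
    field_simp
    ring⟩

theorem coordVector_apply (i k : Fin (m + 1)) :
    (coordVector m i).1 k = (if k = i then 1 else 0) - 1 / (m + 1) := rfl

theorem inner_coordVector (x : zeroSumHyperplane m) (i : Fin (m + 1)) :
    ⟪x, coordVector m i⟫ = x.1 i := by
  simp only [inner_eq_sum, coordVector_apply, mul_sub, mul_ite, mul_one, mul_zero,
    Finset.sum_sub_distrib, Finset.sum_ite_eq', Finset.mem_univ, if_true, ← Finset.sum_mul,
    sum_apply_eq_zero, zero_mul, sub_zero]

theorem sum_apply_mul_apply {ι : Type*} [Fintype ι]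
    (b : OrthonormalBasis ι ℝ (zeroSumHyperplane m)) (i j : Fin (m + 1)) :
    ∑ r, (b r).1 i * (b r).1 j = (if i = j then 1 else 0) - 1 / (m + 1) := by
  have h := b.sum_inner_mul_inner (coordVector m i) (coordVector m j)
  simp_rw [real_inner_comm _ (coordVector m i), inner_coordVector] at h
  rw [h, coordVector_apply]

end zeroSumHyperplane

open zeroSumHyperplane

section cubeForm

variable {m : ℕ} {ι : Type*} [Fintype ι] (b : OrthonormalBasis ι ℝ (zeroSumHyperplane m))

theorem sum_cubeForm_self_self (y : zeroSumHyperplane m) :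
    ∑ r, cubeForm m (b r) (b r) y = 0 := by
  unfold cubeForm
  rw [Finset.sum_comm]
  simp only [← Finset.sum_mul, sum_apply_mul_apply, if_true, ← Finset.mul_sum,
    sum_apply_eq_zero, mul_zero]

theorem sum_cubeForm_mul_cubeForm (p s q t : zeroSumHyperplane m) :
    ∑ r, cubeForm m (b r) p s * cubeForm m (b r) q t
      = ∑ i, p.1 i * s.1 i * q.1 i * t.1 i - ⟪p, s⟫ * ⟪q, t⟫ / (m + 1) := by
  calc ∑ r, cubeForm m (b r) p s * cubeForm m (b r) q t
      = ∑ i, ∑ j, (∑ r, (b r).1 i * (b r).1 j) * (p.1 i * s.1 i * (q.1 j * t.1 j)) := by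
        simp only [cubeForm, Finset.sum_mul_sum]
        simp only [Finset.sum_mul]
        rw [Finset.sum_comm]
        refine Finset.sum_congr rfl fun i _ => ?_
        rw [Finset.sum_comm]
        exact Finset.sum_congr rfl fun j _ => Finset.sum_congr rfl fun r _ => by ring
    _ = ∑ i, p.1 i * s.1 i * q.1 i * t.1 i
          - (∑ i, ∑ j, p.1 i * s.1 i * (q.1 j * t.1 j)) / (m + 1) := by
        simp only [sum_apply_mul_apply, sub_mul, ite_mul, one_mul, zero_mul,
          Finset.sum_sub_distrib, Finset.sum_ite_eq, Finset.mem_univ, if_true, Finset.sum_div]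
        congr 1
        · exact Finset.sum_congr rfl fun i _ => by ring
        · exact Finset.sum_congr rfl fun i _ => Finset.sum_congr rfl fun j _ => by ring
    _ = _ := by rw [inner_eq_sum, inner_eq_sum, Finset.sum_mul_sum]

theorem sum_cubeForm_antisymm (p q s t : zeroSumHyperplane m) :
    ∑ r, (cubeForm m (b r) p s * cubeForm m (b r) q t
        - cubeForm m (b r) p t * cubeForm m (b r) q s)
      = -(⟪p, s⟫ * ⟪q, t⟫ - ⟪p, t⟫ * ⟪q, s⟫) / (m + 1) := by
  have quartic_symm : ∑ i, p.1 i * t.1 i * q.1 i * s.1 i = ∑ i, p.1 i * s.1 i * q.1 i * t.1 i :=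
    Finset.sum_congr rfl fun i _ => by ring
  rw [Finset.sum_sub_distrib, sum_cubeForm_mul_cubeForm, sum_cubeForm_mul_cubeForm, quartic_symm]
  ring

end cubeForm

theorem cubeForm_permOnHyperplane {m : ℕ} (σ : Equiv.Perm (Fin (m + 1)))
    (x y z : zeroSumHyperplane m) :
    cubeForm m (permOnHyperplane m σ x) (permOnHyperplane m σ y) (permOnHyperplane m σ z)
      = cubeForm m x y z :=
  Equiv.sum_comp σ fun i => x.1 i * y.1 i * z.1 i

theorem exists_superconformal_cubeForm_general (m : ℕ) :
    ∃ lam : ℝ, lam ≠ 0 ∧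
      (∀ b : OrthonormalBasis (Fin m) ℝ (zeroSumHyperplane m),
        (∀ y : zeroSumHyperplane m, ∑ r : Fin m, lam * cubeForm m (b r) (b r) y = 0) ∧
        (∀ p q s t : zeroSumHyperplane m,
          ∑ r : Fin m,
            ((lam * cubeForm m (b r) p s) * (lam * cubeForm m (b r) q t)
              - (lam * cubeForm m (b r) p t) * (lam * cubeForm m (b r) q s))
          = -(⟪p, s⟫ * ⟪q, t⟫ - ⟪p, t⟫ * ⟪q, s⟫))) ∧
      (∀ σ : Equiv.Perm (Fin (m + 1)), ∀ x y z : zeroSumHyperplane m,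
        cubeForm m (permOnHyperplane m σ x) (permOnHyperplane m σ y)
          (permOnHyperplane m σ z) = cubeForm m x y z) := by
  have hsq : √((m : ℝ) + 1) * √((m : ℝ) + 1) = m + 1 := Real.mul_self_sqrt (by positivity)
  refine ⟨√((m : ℝ) + 1), by positivity, fun b => ⟨fun y => ?_, fun p q s t => ?_⟩,
    cubeForm_permOnHyperplane⟩
  · rw [← Finset.mul_sum, sum_cubeForm_self_self, mul_zero]
  · calc _ = (√((m : ℝ) + 1) * √((m : ℝ) + 1)) * ∑ r,
            (cubeForm m (b r) p s * cubeForm m (b r) q t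
              - cubeForm m (b r) p t * cubeForm m (b r) q s) := by
          rw [Finset.mul_sum]
          exact Finset.sum_congr rfl fun r _ => by ring
      _ = _ := by
          rw [hsq, sum_cubeForm_antisymm]
          field_simp

/-- for some nonzero `λ`, the trilinear form
`τ(x,y,z) = λ ∑ᵢ xᵢ yᵢ zᵢ` on the zero-sum hyperplane `H ⊂ ℝ^{m+1}` is traceless and
satisfies the superconformal identity (with respect to any orthonormal basis of `H`),
and it is invariant under all coordinate permutations. -/
theorem exists_superconformal_cubeForm (m : ℕ) (hm : 2 ≤ m) :
    ∃ lam : ℝ, lam ≠ 0 ∧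
      (∀ b : OrthonormalBasis (Fin m) ℝ (zeroSumHyperplane m),
        (∀ y : zeroSumHyperplane m, ∑ r : Fin m, lam * cubeForm m (b r) (b r) y = 0) ∧
        (∀ p q s t : zeroSumHyperplane m,
          ∑ r : Fin m,
            ((lam * cubeForm m (b r) p s) * (lam * cubeForm m (b r) q t)
              - (lam * cubeForm m (b r) p t) * (lam * cubeForm m (b r) q s))
          = -(⟪p, s⟫ * ⟪q, t⟫ - ⟪p, t⟫ * ⟪q, s⟫))) ∧
      (∀ σ : Equiv.Perm (Fin (m + 1)), ∀ x y z : zeroSumHyperplane m,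
        cubeForm m (permOnHyperplane m σ x) (permOnHyperplane m σ y)
          (permOnHyperplane m σ z) = cubeForm m x y z) :=
  exists_superconformal_cubeForm_general m

end
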